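/- If M is an Archimedean magnitude space, M' is a continuous (complete and without least element) magnitude space, a ∈ M and a' ∈ M', then there exists a unique homomorphism φ : M → M' with φ(a) = a'. Consequently, any two continuous magnitude spaces are isomorphic. -/
import Mathlib


/-- A magnitude space: nonempty, associative, commutative `+` with trichotomy. -/
class MagnitudeSpace (M : Type*) extends Add M where
  nonempty : Nonempty M
  add_assoc' : ∀ a b c : M, a + (b + c) = (a + b) + c
  add_comm' : ∀ a b : M, a + b = b + a
  trichotomy : ∀ a b : M,
    ((∃ d, a = b + d) ∧ a ≠ b ∧ ¬ (∃ d, b = a + d)) ∨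
    (¬ (∃ d, a = b + d) ∧ a = b ∧ ¬ (∃ d, b = a + d)) ∨
    (¬ (∃ d, a = b + d) ∧ a ≠ b ∧ (∃ d, b = a + d))

variable {M : Type*}

/-- `a` is less than `b` iff `b = a + d` for some `d`. -/
def mlt [MagnitudeSpace M] (a b : M) : Prop := ∃ d, b = a + d

/-- `a ≤ b` iff `a < b` or `a = b`. -/
def mle [MagnitudeSpace M] (a b : M) : Prop := mlt a b ∨ a = b

/-- `nsm n a` is the `(n+1)`-fold sum of `a`; as `n` ranges over `ℕ` this
gives exactly the positive integral multiples of `a`. -/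
def nsm [MagnitudeSpace M] : ℕ → M → M
  | 0, a => a
  | n + 1, a => nsm n a + a

section MagAux

variable [MagnitudeSpace M]

private instance magACS : AddCommSemigroup M where
  add_assoc a b c := (MagnitudeSpace.add_assoc' a b c).symm
  add_comm := MagnitudeSpace.add_comm'

theorem mag_mlt_irrefl (a : M) : ¬ mlt a a := by
  rcases MagnitudeSpace.trichotomy a a with ⟨_, h, _⟩ | ⟨h, _, _⟩ | ⟨_, h, _⟩
  · exact absurd rfl h
  · exact h
  · exact absurd rfl h

theorem mag_mlt_trans {a b c : M} (h1 : mlt a b) (h2 : mlt b c) : mlt a c := by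
  obtain ⟨d, rfl⟩ := h1
  obtain ⟨e, rfl⟩ := h2
  exact ⟨d + e, by rw [add_assoc]⟩

theorem mag_mlt_asymm {a b : M} (h1 : mlt a b) (h2 : mlt b a) : False :=
  mag_mlt_irrefl a (mag_mlt_trans h1 h2)

theorem mag_mlt_total (a b : M) : mlt a b ∨ a = b ∨ mlt b a := by
  rcases MagnitudeSpace.trichotomy a b with ⟨h, _, _⟩ | ⟨_, h, _⟩ | ⟨_, _, h⟩
  · exact Or.inr (Or.inr h)
  · exact Or.inr (Or.inl h)
  · exact Or.inl h

theorem mag_mle_refl (a : M) : mle a a := Or.inr rfl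

theorem mag_mle_of_mlt {a b : M} (h : mlt a b) : mle a b := Or.inl h

theorem mag_mlt_of_mle_of_mlt {a b c : M} (h1 : mle a b) (h2 : mlt b c) : mlt a c := by
  rcases h1 with h1 | rfl
  · exact mag_mlt_trans h1 h2
  · exact h2

theorem mag_mlt_of_mlt_of_mle {a b c : M} (h1 : mlt a b) (h2 : mle b c) : mlt a c := by
  rcases h2 with h2 | rfl
  · exact mag_mlt_trans h1 h2
  · exact h1

theorem mag_mle_trans {a b c : M} (h1 : mle a b) (h2 : mle b c) : mle a c := by
  rcases h1 with h1 | rfl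
  · exact Or.inl (mag_mlt_of_mlt_of_mle h1 h2)
  · exact h2

theorem mag_mle_antisymm {a b : M} (h1 : mle a b) (h2 : mle b a) : a = b := by
  rcases h1 with h1 | rfl
  · rcases h2 with h2 | rfl
    · exact absurd h2 (fun h => mag_mlt_asymm h1 h)
    · exact rfl
  · rfl

theorem mag_mle_of_not_mlt {a b : M} (h : ¬ mlt a b) : mle b a := by
  rcases mag_mlt_total a b with h1 | rfl | h1
  · exact absurd h1 h
  · exact mag_mle_refl a
  · exact Or.inl h1

theorem mag_mlt_of_not_mle {a b : M} (h : ¬ mle a b) : mlt b a := by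
  rcases mag_mlt_total a b with h1 | rfl | h1
  · exact absurd (Or.inl h1) h
  · exact absurd (mag_mle_refl a) h
  · exact h1

theorem mag_mlt_add_right (a b : M) : mlt a (a + b) := ⟨b, rfl⟩

theorem mag_add_lt_left (a : M) {b c : M} (h : mlt b c) : mlt (a + b) (a + c) := by
  obtain ⟨d, rfl⟩ := h
  exact ⟨d, by rw [add_assoc]⟩

theorem mag_add_lt_right (a : M) {b c : M} (h : mlt b c) : mlt (b + a) (c + a) := by
  rw [add_comm b a, add_comm c a]; exact mag_add_lt_left a h

theorem mag_add_le_left (a : M) {b c : M} (h : mle b c) : mle (a + b) (a + c) := by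
  rcases h with h | rfl
  · exact Or.inl (mag_add_lt_left a h)
  · exact mag_mle_refl _

theorem mag_add_le_right (a : M) {b c : M} (h : mle b c) : mle (b + a) (c + a) := by
  rw [add_comm b a, add_comm c a]; exact mag_add_le_left a h

theorem mag_lt_of_add_lt_left {a b c : M} (h : mlt (a + b) (a + c)) : mlt b c := by
  rcases mag_mlt_total b c with h1 | rfl | h1
  · exact h1
  · exact absurd h (mag_mlt_irrefl _)
  · exact absurd (mag_add_lt_left a h1) (fun h' => mag_mlt_asymm h h')

theorem mag_le_of_add_le_left {a b c : M} (h : mle (a + b) (a + c)) : mle b c := by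
  rcases h with h | h
  · exact Or.inl (mag_lt_of_add_lt_left h)
  · rcases mag_mlt_total b c with h1 | rfl | h1
    · exact Or.inl h1
    · exact mag_mle_refl _
    · exact absurd (h ▸ mag_add_lt_left a h1) (mag_mlt_irrefl _)

theorem mag_mle_add_mle {a b c d : M} (h1 : mle a b) (h2 : mle c d) :
    mle (a + c) (b + d) := by
  have t1 : mle (a + c) (a + d) := mag_add_le_left a h2
  have t2 : mle (a + d) (b + d) := mag_add_le_right d h1
  exact mag_mle_trans t1 t2

theorem mag_mlt_add_mlt {a b c d : M} (h1 : mlt a b) (h2 : mlt c d) :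
    mlt (a + c) (b + d) :=
  mag_mlt_trans (mag_add_lt_left a h2) (mag_add_lt_right d h1)

theorem mag_mle_add_mlt {a b c d : M} (h1 : mle a b) (h2 : mlt c d) :
    mlt (a + c) (b + d) :=
  mag_mlt_of_mlt_of_mle (mag_add_lt_left a h2) (mag_add_le_right d h1)

theorem mag_mlt_add_mle {a b c d : M} (h1 : mlt a b) (h2 : mle c d) :
    mlt (a + c) (b + d) :=
  mag_mlt_of_mle_of_mlt (mag_add_le_left a h2) (mag_add_lt_right d h1)

@[simp] theorem nsm_zero (x : M) : nsm 0 x = x := rfl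

theorem nsm_succ (n : ℕ) (x : M) : nsm (n + 1) x = nsm n x + x := rfl

theorem nsm_add_nsm (m n : ℕ) (x : M) : nsm m x + nsm n x = nsm (m + n + 1) x := by
  induction n with
  | zero => rfl
  | succ n ih =>
    rw [nsm_succ, ← add_assoc, ih]
    rfl

theorem nsm_add (n : ℕ) (x y : M) : nsm n (x + y) = nsm n x + nsm n y := by
  induction n with
  | zero => rfl
  | succ n ih =>
    rw [nsm_succ, ih, nsm_succ, nsm_succ]
    rw [add_assoc, add_assoc]
    congr 1
    rw [← add_assoc, ← add_assoc, add_comm x (nsm n y)]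

theorem nsm_nsm (m n : ℕ) (x : M) : nsm m (nsm n x) = nsm (m * n + m + n) x := by
  induction m with
  | zero => simp
  | succ m ih =>
    rw [nsm_succ, ih, nsm_add_nsm]
    congr 1
    ring

theorem nsm_lt_right {x y : M} (h : mlt x y) (n : ℕ) : mlt (nsm n x) (nsm n y) := by
  induction n with
  | zero => exact h
  | succ n ih => exact mag_mlt_add_mlt ih h

theorem nsm_le_right {x y : M} (h : mle x y) (n : ℕ) : mle (nsm n x) (nsm n y) := by
  rcases h with h | rfl
  · exact Or.inl (nsm_lt_right h n)
  · exact mag_mle_refl _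

theorem nsm_lt_left (x : M) {m n : ℕ} (h : m < n) : mlt (nsm m x) (nsm n x) := by
  obtain ⟨k, rfl⟩ : ∃ k, n = m + k + 1 := ⟨n - m - 1, by omega⟩
  exact ⟨nsm k x, (nsm_add_nsm m k x).symm⟩

theorem nsm_le_left (x : M) {m n : ℕ} (h : m ≤ n) : mle (nsm m x) (nsm n x) := by
  rcases Nat.lt_or_ge m n with h1 | h1
  · exact Or.inl (nsm_lt_left x h1)
  · have : m = n := le_antisymm h h1
    rw [this]; exact mag_mle_refl _

theorem mag_lt_of_nsm_lt_left {x : M} {m n : ℕ} (h : mlt (nsm m x) (nsm n x)) : m < n := by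
  by_contra h1
  exact mag_mlt_irrefl _ (mag_mlt_of_mle_of_mlt (nsm_le_left x (show n ≤ m by omega)) h)

theorem mag_le_of_nsm_le_left {x : M} {m n : ℕ} (h : mle (nsm m x) (nsm n x)) : m ≤ n := by
  by_contra h1
  exact mag_mlt_irrefl _ (mag_mlt_of_mle_of_mlt h (nsm_lt_left x (by omega)))

theorem mag_lt_of_nsm_lt_right {x y : M} {n : ℕ} (h : mlt (nsm n x) (nsm n y)) : mlt x y := by
  rcases mag_mlt_total x y with h1 | rfl | h1
  · exact h1
  · exact absurd h (mag_mlt_irrefl _)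
  · exact absurd (nsm_lt_right h1 n) (fun h' => mag_mlt_asymm h h')

theorem mag_mle_nsm (n : ℕ) (x : M) : mle x (nsm n x) := nsm_le_left x (Nat.zero_le n)

end MagAux

section MagComplete

variable {N : Type*} [MagnitudeSpace N]

theorem mag_exists_mlt (hnd : ¬ ∃ e : N, ∀ x : N, mle e x) (b : N) : ∃ c, mlt c b := by
  by_contra h
  push_neg at h
  exact hnd ⟨b, fun x => mag_mle_of_not_mlt (h x)⟩

theorem mag_halve (hnd : ¬ ∃ e : N, ∀ x : N, mle e x) (b : N) : ∃ z, mle (z + z) b := by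
  obtain ⟨c, d, hd⟩ := mag_exists_mlt hnd b
  rcases mag_mlt_total c d with h | rfl | h
  · obtain ⟨e, rfl⟩ := h
    exact ⟨c, Or.inl ⟨e, by rw [hd, add_assoc]⟩⟩
  · exact ⟨c, Or.inr hd.symm⟩
  · obtain ⟨e, rfl⟩ := h
    exact ⟨d, Or.inl ⟨e, by rw [hd, add_comm (d + e) d, add_assoc]⟩⟩

theorem mag_nsm_small (hnd : ¬ ∃ e : N, ∀ x : N, mle e x) :
    ∀ (n : ℕ) (b : N), ∃ z, mle (nsm n z) b := by
  intro n
  induction n with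
  | zero => exact fun b => ⟨b, mag_mle_refl b⟩
  | succ n ih =>
    intro b
    obtain ⟨w, hw⟩ := mag_halve hnd b
    obtain ⟨z, hz⟩ := ih w
    refine ⟨z, ?_⟩
    have h1 : mle (nsm n z + z) (w + w) :=
      mag_mle_add_mle hz (mag_mle_trans (mag_mle_nsm n z) hz)
    exact mag_mle_trans h1 hw

theorem mag_arch_of_complete
    (hcomp : ∀ A : Set N, A.Nonempty → (∃ u : N, ∀ x ∈ A, mle x u) →
      ∃ l : N, (∀ x ∈ A, mle x l) ∧ ∀ u : N, (∀ x ∈ A, mle x u) → mle l u) :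
    ∀ x y : N, ∃ n : ℕ, mlt y (nsm n x) := by
  intro x y
  by_contra h
  push_neg at h
  have hub : ∀ n, mle (nsm n x) y := fun n => mag_mle_of_not_mlt (h n)
  obtain ⟨s, hub_s, hleast⟩ := hcomp (Set.range fun n => nsm n x)
    ⟨x, ⟨0, rfl⟩⟩ ⟨y, by rintro _ ⟨n, rfl⟩; exact hub n⟩
  have hxs : mle x s := hub_s _ ⟨0, rfl⟩
  have hxs' : mlt x s := by
    rcases hxs with h1 | h1
    · exact h1
    · exfalso
      have h2 : mle (x + x) s := hub_s _ ⟨1, rfl⟩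
      rw [← h1] at h2
      exact mag_mlt_irrefl _ (mag_mlt_of_mle_of_mlt h2 (mag_mlt_add_right x x))
  obtain ⟨r, hr⟩ := hxs'
  have hub_r : ∀ z ∈ Set.range fun n => nsm n x, mle z r := by
    rintro _ ⟨n, rfl⟩
    have h2 : mle (nsm n x + x) s := hub_s _ ⟨n + 1, rfl⟩
    rw [hr, add_comm x r] at h2
    rw [add_comm (nsm n x) x, add_comm r x] at h2
    exact mag_le_of_add_le_left h2
  have h3 : mle s r := hleast r hub_r
  have h4 : mlt r s := by rw [hr, add_comm]; exact mag_mlt_add_right r x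
  exact mag_mlt_irrefl s (mag_mlt_of_mle_of_mlt h3 h4)

end MagComplete

theorem mag_key {M M' : Type*} [MagnitudeSpace M] [MagnitudeSpace M']
    (harch : ∀ x y : M, ∃ n : ℕ, mlt y (nsm n x))
    (hcomp' : ∀ A : Set M', A.Nonempty → (∃ u : M', ∀ x ∈ A, mle x u) →
      ∃ l : M', (∀ x ∈ A, mle x l) ∧ ∀ u : M', (∀ x ∈ A, mle x u) → mle l u)
    (hnd' : ¬ ∃ e : M', ∀ x : M', mle e x)
    (a : M) (a' : M') :
    ∃! φ : M → M', (∀ x y : M, φ (x + y) = φ x + φ y) ∧ φ a = a' := by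
  classical
  have harch' : ∀ x y : M', ∃ n : ℕ, mlt y (nsm n x) := mag_arch_of_complete hcomp'
  set S : M → Set M' :=
    fun x => {z | ∃ p q : ℕ, mlt (nsm q z) (nsm p a') ∧ mle (nsm p a) (nsm q x)} with hS
  -- nonempty
  have hne : ∀ x, (S x).Nonempty := by
    intro x
    obtain ⟨n, hn⟩ := harch x a
    obtain ⟨c, hc⟩ := mag_exists_mlt hnd' a'
    obtain ⟨z, hz⟩ := mag_nsm_small hnd' n c
    exact ⟨z, 0, n, mag_mlt_of_mle_of_mlt hz hc, mag_mle_of_mlt hn⟩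
  -- bounded
  have hbdd : ∀ x, ∃ u, ∀ z ∈ S x, mle z u := by
    intro x
    obtain ⟨P, hP⟩ := harch a x
    refine ⟨nsm P a', ?_⟩
    rintro z ⟨p, q, h1, h2⟩
    by_contra hcon
    have hzc : mlt (nsm P a') z := mag_mlt_of_not_mle hcon
    have c1 : mlt (nsm (q * P + q + P) a') (nsm p a') := by
      have := nsm_lt_right hzc q
      rw [nsm_nsm] at this
      exact mag_mlt_of_mlt_of_mle this (mag_mle_of_mlt h1)
    have c2 : mlt (nsm p a) (nsm (q * P + q + P) a) := by
      have := nsm_lt_right hP q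
      rw [nsm_nsm] at this
      exact mag_mlt_of_mle_of_mlt h2 this
    exact Nat.lt_irrefl _ ((mag_lt_of_nsm_lt_left c1).trans (mag_lt_of_nsm_lt_left c2))
  choose φ hφub hφl using fun x => hcomp' (S x) (hne x) (hbdd x)
  -- lower estimate
  have E1 : ∀ (x : M) (p q : ℕ), mle (nsm p a) (nsm q x) → mle (nsm p a') (nsm q (φ x)) := by
    intro x p q hpq
    by_contra hcon
    obtain ⟨d, hd⟩ := mag_mlt_of_not_mle hcon
    obtain ⟨c, c', hcc⟩ := mag_exists_mlt hnd' d
    obtain ⟨ε, hε⟩ := mag_nsm_small hnd' q c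
    have hmem : φ x + ε ∈ S x := by
      refine ⟨p, q, ?_, hpq⟩
      rw [nsm_add]
      have t1 : mle (nsm q (φ x) + nsm q ε) (nsm q (φ x) + c) := mag_add_le_left _ hε
      have t2 : mlt (nsm q (φ x) + c) (nsm q (φ x) + d) := mag_add_lt_left _ ⟨c', hcc⟩
      rw [← hd] at t2
      exact mag_mlt_of_mle_of_mlt t1 t2
    have := hφub x _ hmem
    exact mag_mlt_irrefl _ (mag_mlt_of_mle_of_mlt this (mag_mlt_add_right (φ x) ε))
  -- "eps-approximation" of the lub
  have heps : ∀ (x : M) (ε : M'), ∃ z ∈ S x, mle (φ x) (z + ε) := by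
    intro x ε
    rcases mag_mlt_total ε (φ x) with hlt | heq | hgt
    · obtain ⟨r, hr⟩ := hlt
      by_contra hcon
      push_neg at hcon
      have hub_r : ∀ z ∈ S x, mle z r := by
        intro z hz
        have h1 : mlt (z + ε) (φ x) := mag_mlt_of_not_mle (hcon z hz)
        rw [hr, add_comm z ε, add_comm ε r] at h1
        rw [add_comm r ε] at h1
        exact mag_mle_of_mlt (mag_lt_of_add_lt_left h1)
      have h2 : mle (φ x) r := hφl x r hub_r
      have h3 : mlt r (φ x) := by rw [hr, add_comm]; exact mag_mlt_add_right r ε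
      exact mag_mlt_irrefl _ (mag_mlt_of_mle_of_mlt h2 h3)
    · obtain ⟨z, hz⟩ := hne x
      refine ⟨z, hz, ?_⟩
      rw [← heq]
      exact mag_mle_of_mlt (by rw [add_comm]; exact mag_mlt_add_right ε z)
    · obtain ⟨z, hz⟩ := hne x
      refine ⟨z, hz, ?_⟩
      have : mlt (φ x) (z + ε) := by
        rw [add_comm]
        exact mag_mlt_of_mlt_of_mle hgt (mag_mle_of_mlt (mag_mlt_add_right ε z))
      exact mag_mle_of_mlt this
  -- upper estimate
  have E2 : ∀ (x : M) (p q : ℕ), mle (nsm q x) (nsm p a) → mle (nsm q (φ x)) (nsm p a') := by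
    intro x p q hpq
    by_contra hcon
    obtain ⟨d, hd⟩ := mag_mlt_of_not_mle hcon
    obtain ⟨c, c', hcc⟩ := mag_exists_mlt hnd' d
    obtain ⟨ε, hε⟩ := mag_nsm_small hnd' q c
    obtain ⟨z, hz, hzε⟩ := heps x ε
    have h1 : mle (nsm q (φ x)) (nsm q z + c) := by
      have t1 : mle (nsm q (φ x)) (nsm q (z + ε)) := nsm_le_right hzε q
      rw [nsm_add] at t1
      exact mag_mle_trans t1 (mag_add_le_left _ hε)
    have h2 : mlt (nsm p a') (nsm q z) := by
      have t2 : mle (nsm p a' + (c + c')) (nsm q z + c) := by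
        rw [← hcc, ← hd]; exact h1
      rw [show nsm p a' + (c + c') = c + (nsm p a' + c') by
            rw [add_comm c c', ← add_assoc, add_comm _ c]] at t2
      rw [add_comm (nsm q z) c] at t2
      have t3 : mle (nsm p a' + c') (nsm q z) := mag_le_of_add_le_left t2
      exact mag_mlt_of_mlt_of_mle (mag_mlt_add_right _ c') t3
    obtain ⟨pt, qt, hz1, hz2⟩ := hz
    have c1 : mlt (nsm (qt * p + qt + p) a') (nsm (qt * q + qt + q) z) := by
      have := nsm_lt_right h2 qt
      rw [nsm_nsm, nsm_nsm] at this
      exact this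
    have c2 : mlt (nsm (q * qt + q + qt) z) (nsm (q * pt + q + pt) a') := by
      have := nsm_lt_right hz1 q
      rw [nsm_nsm, nsm_nsm] at this
      exact this
    have hidx : qt * q + qt + q = q * qt + q + qt := by ring
    rw [hidx] at c1
    have c3 : qt * p + qt + p < q * pt + q + pt :=
      mag_lt_of_nsm_lt_left (mag_mlt_trans c1 c2)
    have d1 : mle (nsm (qt * q + qt + q) x) (nsm (qt * p + qt + p) a) := by
      have := nsm_le_right hpq qt
      rw [nsm_nsm, nsm_nsm] at this
      exact this
    have d2 : mle (nsm (q * pt + q + pt) a) (nsm (q * qt + q + qt) x) := by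
      have := nsm_le_right hz2 q
      rw [nsm_nsm, nsm_nsm] at this
      exact this
    rw [show q * qt + q + qt = qt * q + qt + q by ring] at d2
    have c4 : q * pt + q + pt ≤ qt * p + qt + p :=
      mag_le_of_nsm_le_left (mag_mle_trans d2 d1)
    exact Nat.lt_irrefl _ (Nat.lt_of_lt_of_le c3 c4)
  -- minimal integer bound
  have findp : ∀ (w : M) (Q : ℕ), mle a (nsm Q w) →
      ∃ p : ℕ, mle (nsm p a) (nsm Q w) ∧ mlt (nsm Q w) (nsm (p + 1) a) := by
    intro w Q hw
    have hex : ∃ k, mlt (nsm Q w) (nsm k a) := harch a (nsm Q w)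
    have hspec := Nat.find_spec hex
    have hpos : Nat.find hex ≠ 0 := by
      intro h0
      rw [h0] at hspec
      exact mag_mlt_irrefl a (mag_mlt_of_mle_of_mlt hw hspec)
    obtain ⟨p, hp⟩ := Nat.exists_eq_succ_of_ne_zero hpos
    refine ⟨p, ?_, by have := hspec; rw [hp] at this; exact this⟩
    have := Nat.find_min hex (by omega : p < Nat.find hex)
    exact mag_mle_of_not_mlt this
  -- the comparison lemma
  have cmp : ∀ (x : M) (u v : M'),
      (∀ p q : ℕ, mle (nsm p a) (nsm q x) → mle (nsm p a') (nsm q u)) →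
      (∀ p q : ℕ, mle (nsm q x) (nsm p a) → mle (nsm q v) (nsm p a')) →
      ¬ mlt u v := by
    intro x u v hu hv hlt
    obtain ⟨d, hd⟩ := hlt
    obtain ⟨Q1, hQ1⟩ := harch' d (a' + a')
    obtain ⟨Q2, hQ2⟩ := harch x a
    set Q := Q1 + Q2 with hQ
    have hQd : mlt (a' + a') (nsm Q d) :=
      mag_mlt_of_mlt_of_mle hQ1 (nsm_le_left d (by omega))
    have hQx : mle a (nsm Q x) :=
      mag_mle_of_mlt (mag_mlt_of_mlt_of_mle hQ2 (nsm_le_left x (by omega)))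
    obtain ⟨p, hp1, hp2⟩ := findp x Q hQx
    have h1 : mle (nsm p a') (nsm Q u) := hu p Q hp1
    have h2 : mle (nsm Q v) (nsm (p + 1) a') := hv (p + 1) Q (mag_mle_of_mlt hp2)
    have h3 : mlt (nsm (p + 1) a') (nsm Q v) := by
      have e : nsm Q v = nsm Q u + nsm Q d := by rw [hd, nsm_add]
      rw [e]
      have t1 : mlt (nsm p a' + (a' + a')) (nsm Q u + nsm Q d) := mag_mle_add_mlt h1 hQd
      have t2 : mlt (nsm (p + 1) a') (nsm p a' + (a' + a')) := by
        rw [nsm_succ, add_comm a' a', ← add_assoc]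
        exact mag_mlt_add_right _ a'
      exact mag_mlt_trans t2 t1
    exact mag_mlt_irrefl _ (mag_mlt_of_mle_of_mlt h2 h3)
  -- φ a = a'
  have hφa : φ a = a' := by
    have ha1 : ∀ p q : ℕ, mle (nsm p a) (nsm q a) → mle (nsm p a') (nsm q a') :=
      fun p q h => nsm_le_left a' (mag_le_of_nsm_le_left h)
    have ha2 : ∀ p q : ℕ, mle (nsm q a) (nsm p a) → mle (nsm q a') (nsm p a') :=
      fun p q h => nsm_le_left a' (mag_le_of_nsm_le_left h)
    have n1 : ¬ mlt a' (φ a) := cmp a a' (φ a) ha1 (E2 a)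
    have n2 : ¬ mlt (φ a) a' := cmp a (φ a) a' (E1 a) ha2
    rcases mag_mlt_total (φ a) a' with h | h | h
    · exact absurd h n2
    · exact h
    · exact absurd h n1
  -- additivity
  have hφadd : ∀ x y : M, φ (x + y) = φ x + φ y := by
    intro x y
    rcases mag_mlt_total (φ (x + y)) (φ x + φ y) with hlt | heq | hgt
    · -- φ(x+y) < φx + φy : impossible
      exfalso
      obtain ⟨d, hd⟩ := hlt
      obtain ⟨Q1, hQ1⟩ := harch' d (a' + a')
      obtain ⟨Q2, hQ2⟩ := harch x a
      obtain ⟨Q3, hQ3⟩ := harch y a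
      set Q := Q1 + Q2 + Q3 with hQdef
      have hQd : mlt (a' + a') (nsm Q d) :=
        mag_mlt_of_mlt_of_mle hQ1 (nsm_le_left d (by omega))
      have hQx : mle a (nsm Q x) :=
        mag_mle_of_mlt (mag_mlt_of_mlt_of_mle hQ2 (nsm_le_left x (by omega)))
      have hQy : mle a (nsm Q y) :=
        mag_mle_of_mlt (mag_mlt_of_mlt_of_mle hQ3 (nsm_le_left y (by omega)))
      obtain ⟨p1, hp11, hp12⟩ := findp x Q hQx
      obtain ⟨p2, hp21, hp22⟩ := findp y Q hQy
      -- lower estimate for φ(x+y)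
      have hlow : mle (nsm (p1 + p2 + 1) a') (nsm Q (φ (x + y))) := by
        apply E1
        rw [← nsm_add_nsm, nsm_add]
        exact mag_mle_add_mle hp11 hp21
      -- upper estimate for φx + φy
      have hup : mle (nsm Q (φ x + φ y)) (nsm (p1 + p2 + 3) a') := by
        rw [nsm_add]
        have t1 : mle (nsm Q (φ x)) (nsm (p1 + 1) a') := E2 x (p1 + 1) Q (mag_mle_of_mlt hp12)
        have t2 : mle (nsm Q (φ y)) (nsm (p2 + 1) a') := E2 y (p2 + 1) Q (mag_mle_of_mlt hp22)
        have t3 := mag_mle_add_mle t1 t2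
        rw [nsm_add_nsm] at t3
        rw [show p1 + 1 + (p2 + 1) + 1 = p1 + p2 + 3 by omega] at t3
        exact t3
      -- contradiction
      have e : nsm Q (φ x + φ y) = nsm Q (φ (x + y)) + nsm Q d := by rw [hd, nsm_add]
      have t4 : mlt (nsm (p1 + p2 + 1) a' + (a' + a')) (nsm Q (φ (x + y)) + nsm Q d) :=
        mag_mle_add_mlt hlow hQd
      have t5 : nsm (p1 + p2 + 1) a' + (a' + a') = nsm (p1 + p2 + 3) a' := by
        rw [← add_assoc]; rfl
      rw [t5, ← e] at t4
      exact mag_mlt_irrefl _ (mag_mlt_of_mle_of_mlt hup t4)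
    · exact heq
    · -- φx + φy < φ(x+y) : impossible
      exfalso
      obtain ⟨d, hd⟩ := hgt
      obtain ⟨Q1, hQ1⟩ := harch' d (a' + a')
      obtain ⟨Q2, hQ2⟩ := harch x a
      obtain ⟨Q3, hQ3⟩ := harch y a
      set Q := Q1 + Q2 + Q3 with hQdef
      have hQd : mlt (a' + a') (nsm Q d) :=
        mag_mlt_of_mlt_of_mle hQ1 (nsm_le_left d (by omega))
      have hQx : mle a (nsm Q x) :=
        mag_mle_of_mlt (mag_mlt_of_mlt_of_mle hQ2 (nsm_le_left x (by omega)))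
      have hQy : mle a (nsm Q y) :=
        mag_mle_of_mlt (mag_mlt_of_mlt_of_mle hQ3 (nsm_le_left y (by omega)))
      obtain ⟨p1, hp11, hp12⟩ := findp x Q hQx
      obtain ⟨p2, hp21, hp22⟩ := findp y Q hQy
      -- lower estimate for φx + φy
      have hlow : mle (nsm (p1 + p2 + 1) a') (nsm Q (φ x + φ y)) := by
        rw [nsm_add, ← nsm_add_nsm]
        exact mag_mle_add_mle (E1 x p1 Q hp11) (E1 y p2 Q hp21)
      -- upper estimate for φ(x+y)
      have hup : mle (nsm Q (φ (x + y))) (nsm (p1 + p2 + 3) a') := by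
        apply E2
        rw [nsm_add]
        have t3 := mag_mlt_add_mlt hp12 hp22
        rw [nsm_add_nsm] at t3
        rw [show p1 + 1 + (p2 + 1) + 1 = p1 + p2 + 3 by omega] at t3
        exact mag_mle_of_mlt t3
      have e : nsm Q (φ (x + y)) = nsm Q (φ x + φ y) + nsm Q d := by rw [hd, nsm_add]
      have t4 : mlt (nsm (p1 + p2 + 1) a' + (a' + a')) (nsm Q (φ x + φ y) + nsm Q d) :=
        mag_mle_add_mlt hlow hQd
      have t5 : nsm (p1 + p2 + 1) a' + (a' + a') = nsm (p1 + p2 + 3) a' := by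
        rw [← add_assoc]; rfl
      rw [t5, ← e] at t4
      exact mag_mlt_irrefl _ (mag_mlt_of_mle_of_mlt hup t4)
  refine ⟨φ, ⟨hφadd, hφa⟩, ?_⟩
  -- uniqueness
  intro ψ ⟨hψadd, hψa⟩
  funext x
  have hψnsm : ∀ (n : ℕ) (u : M), ψ (nsm n u) = nsm n (ψ u) := by
    intro n u
    induction n with
    | zero => rfl
    | succ n ih => rw [nsm_succ, hψadd, ih]; rfl
  have hψmle : ∀ {u v : M}, mle u v → mle (ψ u) (ψ v) := by
    intro u v h
    rcases h with ⟨d, rfl⟩ | rfl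
    · rw [hψadd]; exact Or.inl (mag_mlt_add_right _ _)
    · exact mag_mle_refl _
  have E1ψ : ∀ p q : ℕ, mle (nsm p a) (nsm q x) → mle (nsm p a') (nsm q (ψ x)) := by
    intro p q h
    have := hψmle h
    rw [hψnsm, hψnsm, hψa] at this
    exact this
  have E2ψ : ∀ p q : ℕ, mle (nsm q x) (nsm p a) → mle (nsm q (ψ x)) (nsm p a') := by
    intro p q h
    have := hψmle h
    rw [hψnsm, hψnsm, hψa] at this
    exact this
  have n1 : ¬ mlt (ψ x) (φ x) := cmp x (ψ x) (φ x) E1ψ (E2 x)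
  have n2 : ¬ mlt (φ x) (ψ x) := cmp x (φ x) (ψ x) (E1 x) E2ψ
  rcases mag_mlt_total (ψ x) (φ x) with h | h | h
  · exact absurd h n1
  · exact h
  · exact absurd h n2

theorem stmt_19 {M' : Type*} [MagnitudeSpace M] [MagnitudeSpace M']
    (harch : ∀ x y : M, ∃ n : ℕ, mlt y (nsm n x))
    (hcomp' : ∀ A : Set M', A.Nonempty → (∃ u : M', ∀ x ∈ A, mle x u) →
      ∃ l : M', (∀ x ∈ A, mle x l) ∧ ∀ u : M', (∀ x ∈ A, mle x u) → mle l u)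
    (hnd' : ¬ ∃ e : M', ∀ x : M', mle e x)
    (a : M) (a' : M') :
    (∃! φ : M → M', (∀ x y : M, φ (x + y) = φ x + φ y) ∧ φ a = a') ∧
    ((∀ A : Set M, A.Nonempty → (∃ u : M, ∀ x ∈ A, mle x u) →
        ∃ l : M, (∀ x ∈ A, mle x l) ∧ ∀ u : M, (∀ x ∈ A, mle x u) → mle l u) →
      (¬ ∃ e : M, ∀ x : M, mle e x) →
      ∃ ψ : M → M', (∀ x y : M, ψ (x + y) = ψ x + ψ y) ∧ Function.Bijective ψ) := by
  constructor
  · exact mag_key harch hcomp' hnd' a a'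
  · intro hcompM hndM
    have harch' : ∀ x y : M', ∃ n : ℕ, mlt y (nsm n x) := mag_arch_of_complete hcomp'
    obtain ⟨φ, ⟨hφadd, hφa⟩, hφu⟩ := mag_key harch hcomp' hnd' a a'
    obtain ⟨ρ, ⟨hρadd, hρa⟩, hρu⟩ := mag_key harch' hcompM hndM a' a
    obtain ⟨χ, hχ, hχu⟩ := mag_key harch' hcomp' hnd' a' a'
    have e1 : (fun z => φ (ρ z)) = χ :=
      hχu _ ⟨fun u v => by show φ (ρ (u + v)) = φ (ρ u) + φ (ρ v); rw [hρadd, hφadd], by show φ (ρ a') = a'; rw [hρa, hφa]⟩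
    have e2 : (fun z : M' => z) = χ := hχu _ ⟨fun u v => rfl, rfl⟩
    obtain ⟨χ', hχ', hχ'u⟩ := mag_key harch hcompM hndM a a
    have e3 : (fun z => ρ (φ z)) = χ' :=
      hχ'u _ ⟨fun u v => by show ρ (φ (u + v)) = ρ (φ u) + ρ (φ v); rw [hφadd, hρadd], by show ρ (φ a) = a; rw [hφa, hρa]⟩
    have e4 : (fun z : M => z) = χ' := hχ'u _ ⟨fun u v => rfl, rfl⟩
    refine ⟨φ, hφadd, Function.bijective_iff_has_inverse.mpr ⟨ρ, ?_, ?_⟩⟩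
    · intro z
      have := congrFun (e3.trans e4.symm) z
      exact this
    · intro z
      have := congrFun (e1.trans e2.symm) z
      exact this
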